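/- Let (M,J,g) be a Norden manifold (J an almost complex structure, g a pseudo-Riemannian metric with g(JX,Y) = g(X,JY)), ∇^g the Levi-Civita connection of g, and η a 1-form on M. Then the connection ∇̄_X Y = ∇^g_X Y + η(Y) JX satisfies the quasi-statistical condition: (∇̄_X g)(Y,Z) − (∇̄_Y g)(X,Z) + g(T^{∇̄}(X,Y), Z) = 0 for all vector fields X,Y,Z. -/
import Mathlib

/-- Model of a Norden manifold: `A` is the ring of smooth functions, `V` the `A`-module
of vector fields with Lie bracket `bracket`, `der X f` the derivative of `f` along `X`,
`g` a pseudo-Riemannian metric with `g`-symmetric almost complex structure `J`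
(`J² = -id`, `g(JX, Y) = g(X, JY)`), `nab` the Levi-Civita connection of `g` (metric and
torsion-free), and `η` a one-form. Then the connection `∇̄_X Y = ∇_X Y + η(Y) J X`
satisfies the quasi-statistical condition
`(∇̄_X g)(Y,Z) - (∇̄_Y g)(X,Z) + g(T^∇̄(X,Y), Z) = 0`. -/
theorem norden_quasi_statistical
    {A : Type*} [CommRing A] {V : Type*} [AddCommGroup V] [Module A V]
    (der : V → A → A) (bracket : V → V → V)
    (g : V →ₗ[A] V →ₗ[A] A) (hgsymm : ∀ X Y : V, g X Y = g Y X)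
    (J : V →ₗ[A] V)
    (hJ2 : ∀ X : V, J (J X) = -X)
    (hNorden : ∀ X Y : V, g (J X) Y = g X (J Y))
    (nab : V → V → V)
    (hmetric : ∀ X Y Z : V, der X (g Y Z) = g (nab X Y) Z + g Y (nab X Z))
    (htorsionfree : ∀ X Y : V, nab X Y - nab Y X = bracket X Y)
    (η : V →ₗ[A] A) :
    ∀ X Y Z : V,
      (der X (g Y Z) - g (nab X Y + η Y • J X) Z - g Y (nab X Z + η Z • J X)) -
        (der Y (g X Z) - g (nab Y X + η X • J Y) Z - g X (nab Y Z + η Z • J Y)) +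
        g ((nab X Y + η Y • J X) - (nab Y X + η X • J Y) - bracket X Y) Z = 0 := by
  intro X Y Z
  rw [hmetric, hmetric, ← htorsionfree X Y]
  simp only [map_add, map_sub, map_smul, smul_eq_mul, LinearMap.add_apply,
    LinearMap.sub_apply, LinearMap.smul_apply]
  have h1 : g (J Y) X = g Y (J X) := hNorden Y X
  have h2 : g (J X) Y = g X (J Y) := hNorden X Y
  have h3 : g X (J Y) = g (J Y) X := hgsymm X (J Y)
  linear_combination (η Z) * (h3.trans h1)
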